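/- The 3-VFCA rule f(x,y,z) = (x₁y₂ + y₁z₁ + y₁z₃, x₂y₂ + x₃y₂ + y₁z₂, y₃) is complete number-conserving: for any periodic configuration x¹,…,x^L in the simplex Δ, Σᵢ [f(x^{i-1},xⁱ,x^{i+1})]_k = Σᵢ [xⁱ]_k for k = 1,2,3. -/

import Mathlib

/-!
The third coordinate is copied unchanged. Using that each cell lies on the simplex, the other two
coordinates of `f(x, y, z)` are `y₁ + x₁y₂ - y₁z₂` and `y₂ - x₁y₂ + y₁z₂`, so the first and second
components are locally conserved with opposite currents `J i = x^{i-1}₁ xⁱ₂`; on a periodic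
configuration the sums of these currents telescope to zero.
-/

open Finset Function

section Telescoping

variable {M : Type*} [AddCommGroup M] {L : ℕ}

theorem Function.Periodic.sum_range_sub {J : ℤ → M} (hJ : Periodic J L) :
    ∑ i ∈ range L, (J ((i : ℤ) + 1) - J i) = 0 := by
  have h := Finset.sum_range_sub (fun n : ℕ => J n) L
  push_cast at h
  rw [h, sub_eq_zero, ← zero_add (L : ℤ), hJ]

theorem sum_range_eq_of_eq_add_sub {F a J : ℤ → M} (hJ : Periodic J L)
    (h : ∀ i, F i = a i + (J (i + 1) - J i)) :
    ∑ i ∈ range L, F i = ∑ i ∈ range L, a i := by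
  simp only [h, sum_add_distrib, hJ.sum_range_sub, add_zero]

end Telescoping

-- The paper's coordinates `1, 2, 3` are `0, 1, 2 : Fin 3`.
def rule (x y z : Fin 3 → ℝ) : Fin 3 → ℝ :=
  ![x 0 * y 1 + y 0 * z 0 + y 0 * z 2, x 1 * y 1 + x 2 * y 1 + y 0 * z 1, y 2]

theorem rule_zero (x y : Fin 3 → ℝ) {z : Fin 3 → ℝ} (hz : ∑ m, z m = 1) :
    rule x y z 0 = y 0 + (x 0 * y 1 - y 0 * z 1) := by
  rw [Fin.sum_univ_three] at hz
  simp only [rule, Matrix.cons_val_zero]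
  linear_combination y 0 * hz

theorem rule_one {x : Fin 3 → ℝ} (hx : ∑ m, x m = 1) (y z : Fin 3 → ℝ) :
    rule x y z 1 = y 1 + (y 0 * z 1 - x 0 * y 1) := by
  rw [Fin.sum_univ_three] at hx
  simp only [rule, Matrix.cons_val_one, Matrix.cons_val_zero]
  linear_combination y 1 * hx

def current (x : ℤ → Fin 3 → ℝ) (i : ℤ) : ℝ := x (i - 1) 0 * x i 1

theorem Function.Periodic.current {x : ℤ → Fin 3 → ℝ} {c : ℤ} (hx : Periodic x c) :
    Periodic (current x) c := by
  intro i
  simp only [_root_.current, add_sub_right_comm, hx (i - 1), hx i]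

theorem rule_eq_add_current_sub {x : ℤ → Fin 3 → ℝ} (hΔ : ∀ i, ∑ m, x i m = 1) (i : ℤ) :
    rule (x (i - 1)) (x i) (x (i + 1)) 0 = x i 0 + ((-current x) (i + 1) - (-current x) i) ∧
    rule (x (i - 1)) (x i) (x (i + 1)) 1 = x i 1 + (current x (i + 1) - current x i) := by
  refine ⟨?_, ?_⟩
  · rw [rule_zero _ _ (hΔ _), Pi.neg_apply, Pi.neg_apply, current, current,
      add_sub_cancel_right]
    ring
  · rw [rule_one (hΔ _), current, current, add_sub_cancel_right]

theorem stmt_10 (L : ℕ)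
    (f : (Fin 3 → ℝ) → (Fin 3 → ℝ) → (Fin 3 → ℝ) → (Fin 3 → ℝ))
    (hf : ∀ x y z, f x y z =
      ![x 0 * y 1 + y 0 * z 0 + y 0 * z 2,
        x 1 * y 1 + x 2 * y 1 + y 0 * z 1,
        y 2])
    (x : ℤ → Fin 3 → ℝ) (hper : ∀ i, x (i + L) = x i)
    (hΔ : ∀ i, (∑ m, x i m) = 1 ∧ ∀ m, 0 ≤ x i m) :
    ∀ k, ∑ i ∈ Finset.range L, f (x ((i : ℤ) - 1)) (x (i : ℤ)) (x ((i : ℤ) + 1)) k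
      = ∑ i ∈ Finset.range L, x (i : ℤ) k := by
  obtain rfl : f = rule := funext₃ hf
  have hJ : Periodic (current x) L := Periodic.current hper
  have hlocal := rule_eq_add_current_sub fun i => (hΔ i).1
  intro k
  fin_cases k
  · exact sum_range_eq_of_eq_add_sub (hJ.comp Neg.neg) fun i => (hlocal i).1
  · exact sum_range_eq_of_eq_add_sub hJ fun i => (hlocal i).2
  · exact sum_congr rfl fun _ _ => rfl
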